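/- Soundness of FDD union: for all FDDs d₁ and d₂ and every history h, ⟦d₁ ⊕ d₂⟧ h = ⟦d₁⟧ h ∪ ⟦d₂⟧ h. -/

import Mathlib

namespace NetKAT

/-- Packets: assignments of (natural-number) values to fields. -/
abbrev Packet (F : Type) := F → ℕ

/-- Histories: a nonempty list of packets, represented as (head packet, tail). -/
abbrev Hist (F : Type) := Packet F × List (Packet F)

/-- NetKAT predicates. -/
inductive Pred (F : Type) where
  | id : Pred F
  | drop : Pred F
  | test : F → ℕ → Pred F
  | or : Pred F → Pred F → Pred F
  | and : Pred F → Pred F → Pred F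
  | not : Pred F → Pred F

/-- NetKAT programs. -/
inductive Pol (F : Type) where
  | filter : Pred F → Pol F
  | mod : F → ℕ → Pol F
  | union : Pol F → Pol F → Pol F
  | seq : Pol F → Pol F → Pol F
  | star : Pol F → Pol F
  | dup : Pol F

/-- Iterates of a packet-processing function: `iterRel f 0 h = {h}` and
    `iterRel f (i+1) h = ⋃ h' ∈ f h, iterRel f i h'`. -/
def iterRel {F : Type} (f : Hist F → Set (Hist F)) : ℕ → Hist F → Set (Hist F)
  | 0, h => {h}
  | i+1, h => ⋃ h' ∈ f h, iterRel f i h'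

/-- Semantics of predicates (as filters on histories). -/
def predSem {F : Type} : Pred F → Hist F → Set (Hist F)
  | .id, h => {h}
  | .drop, _ => ∅
  | .test f n, h => if h.1 f = n then {h} else ∅
  | .or a b, h => predSem a h ∪ predSem b h
  | .and a b, h => ⋃ h' ∈ predSem a h, predSem b h'
  | .not a, h => {h} \ predSem a h

/-- Semantics of NetKAT programs: a history is mapped to a set of histories. -/
def polSem {F : Type} [DecidableEq F] : Pol F → Hist F → Set (Hist F)
  | .filter a, h => predSem a h
  | .mod f n, h => {(Function.update h.1 f n, h.2)}
  | .union p q, h => polSem p h ∪ polSem q h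
  | .seq p q, h => ⋃ h' ∈ polSem p h, polSem q h'
  | .star p, h => ⋃ i : ℕ, iterRel (fun h' => polSem p h') i h
  | .dup, h => {(h.1, h.1 :: h.2)}

/-- A program is dup-free if it contains no occurrence of `dup`. -/
def Pol.dupFree {F : Type} : Pol F → Prop
  | .filter _ => True
  | .mod _ _ => True
  | .union p q => p.dupFree ∧ q.dupFree
  | .seq p q => p.dupFree ∧ q.dupFree
  | .star p => p.dupFree
  | .dup => False

/-- Actions: finite partial maps from fields to values. -/
abbrev Act (F : Type) := F → Option ℕ

/-- Apply an action to a packet. -/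
def applyAct {F : Type} (a : Act F) (pk : Packet F) : Packet F :=
  fun f => (a f).getD (pk f)

/-- Semantics of an action on a history. -/
def actSem {F : Type} (a : Act F) (h : Hist F) : Set (Hist F) :=
  {(applyAct a h.1, h.2)}

/-- Forwarding decision diagrams. -/
inductive FDD (F : Type) where
  | const : Finset (Act F) → FDD F
  | cond : F → ℕ → FDD F → FDD F → FDD F

/-- Semantics of FDDs. -/
def fddSem {F : Type} : FDD F → Hist F → Set (Hist F)
  | .const s, h => ⋃ a ∈ s, actSem a h
  | .cond f n d1 d2, h => if h.1 f = n then fddSem d1 h else fddSem d2 h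

variable {F : Type} [Fintype F] [LinearOrder F]

/-- FDD union `d₁ ⊕ d₂`. -/
def fddUnion : FDD F → FDD F → FDD F
  | .const s1, .const s2 => .const (s1 ∪ s2)
  | .cond f n d1 d2, .const s =>
      .cond f n (fddUnion d1 (.const s)) (fddUnion d2 (.const s))
  | .const s, .cond f n d1 d2 =>
      .cond f n (fddUnion (.const s) d1) (fddUnion (.const s) d2)
  | .cond f1 n1 d11 d12, .cond f2 n2 d21 d22 =>
    if f1 = f2 then
      if n1 = n2 then .cond f1 n1 (fddUnion d11 d21) (fddUnion d12 d22)
      else if n1 < n2 then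
        .cond f1 n1 (fddUnion d11 d22) (fddUnion d12 (.cond f2 n2 d21 d22))
      else
        .cond f2 n2 (fddUnion d12 d21) (fddUnion (.cond f1 n1 d11 d12) d22)
    else if f1 < f2 then
      .cond f1 n1 (fddUnion d11 (.cond f2 n2 d21 d22)) (fddUnion d12 (.cond f2 n2 d21 d22))
    else
      .cond f2 n2 (fddUnion (.cond f1 n1 d11 d12) d21) (fddUnion (.cond f1 n1 d11 d12) d22)
termination_by d1 d2 => sizeOf d1 + sizeOf d2
decreasing_by all_goals (simp <;> omega)

/-- Positive restriction `d|_{f=n}`. -/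
def restrictPos (f : F) (n : ℕ) : FDD F → FDD F
  | .const s => .cond f n (.const s) (.const ∅)
  | .cond f1 n1 d1 d2 =>
    if f1 = f then
      if n1 = n then .cond f n d1 (.const ∅)
      else restrictPos f n d2
    else if f < f1 then .cond f n (.cond f1 n1 d1 d2) (.const ∅)
    else .cond f1 n1 (restrictPos f n d1) (restrictPos f n d2)

/-- Negative restriction `d|_{f≠n}`. -/
def restrictNeg (f : F) (n : ℕ) : FDD F → FDD F
  | .const s => .cond f n (.const ∅) (.const s)
  | .cond f1 n1 d1 d2 =>
    if f1 = f then
      if n1 = n then .cond f n (.const ∅) d2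
      else .cond f1 n1 d1 (restrictNeg f n d2)
    else if f < f1 then .cond f n (.const ∅) (.cond f1 n1 d1 d2)
    else .cond f1 n1 (restrictNeg f n d1) (restrictNeg f n d2)

/-- Sequencing of actions `a ; a'`: agrees with `a'` on the domain of `a'`, with `a` elsewhere. -/
def actSeq (a a' : Act F) : Act F :=
  fun f => (a' f).orElse (fun _ => a f)

/-- Sequencing of an action with an FDD, `a ⊙ d`. -/
def actSeqFDD (a : Act F) : FDD F → FDD F
  | .const s => .const (s.image (actSeq a))
  | .cond f n d1 d2 =>
    match a f with
    | some m => if m = n then actSeqFDD a d1 else actSeqFDD a d2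
    | none => .cond f n (actSeqFDD a d1) (actSeqFDD a d2)

/-- FDD sequencing `d₁ ⊙ d₂`. -/
noncomputable def fddSeq : FDD F → FDD F → FDD F
  | .const s, d => (s.toList.map (fun a => actSeqFDD a d)).foldr fddUnion (.const ∅)
  | .cond f n d1 d2, d =>
      fddUnion (restrictPos f n (fddSeq d1 d)) (restrictNeg f n (fddSeq d2 d))

/-- The empty action `⊥`. -/
def emptyAct : Act F := fun _ => none

/-- FDD negation. -/
def fddNeg : FDD F → FDD F
  | .const s => if s = ∅ then .const {emptyAct} else .const ∅
  | .cond f n d1 d2 => .cond f n (fddNeg d1) (fddNeg d2)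

/-- A boolean FDD: every constant diagram occurring in it is `∅` or `{⊥}`. -/
def FDD.boolean : FDD F → Prop
  | .const s => s = ∅ ∨ s = {emptyAct}
  | .cond _ _ d1 d2 => d1.boolean ∧ d2.boolean

/-- The action `{f ← n}` assigning `n` to `f` and undefined elsewhere. -/
def singleAct (f : F) (n : ℕ) : Act F := fun f' => if f' = f then some n else none

/-- Iteration used to compile Kleene star: `e₀ = {⊥}` and `e_{i+1} = {⊥} ⊕ (d ⊙ e_i)`. -/
noncomputable def starIter (d : FDD F) : ℕ → FDD F
  | 0 => .const {emptyAct}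
  | i+1 => fddUnion (.const {emptyAct}) (fddSeq d (starIter d i))

/-- The compilation relation between (dup-free) NetKAT programs and FDDs. -/
inductive Compiles : Pol F → FDD F → Prop where
  | drop : Compiles (.filter .drop) (.const ∅)
  | id : Compiles (.filter .id) (.const {emptyAct})
  | mod (f : F) (n : ℕ) : Compiles (.mod f n) (.const {singleAct f n})
  | test (f : F) (n : ℕ) :
      Compiles (.filter (.test f n)) (.cond f n (.const {emptyAct}) (.const ∅))
  | not {a : Pred F} {d : FDD F} :
      Compiles (.filter a) d → Compiles (.filter (.not a)) (fddNeg d)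
  | por {a b : Pred F} {d1 d2 : FDD F} :
      Compiles (.filter a) d1 → Compiles (.filter b) d2 →
      Compiles (.filter (.or a b)) (fddUnion d1 d2)
  | pand {a b : Pred F} {d1 d2 : FDD F} :
      Compiles (.filter a) d1 → Compiles (.filter b) d2 →
      Compiles (.filter (.and a b)) (fddSeq d1 d2)
  | union {p q : Pol F} {d1 d2 : FDD F} :
      Compiles p d1 → Compiles q d2 → Compiles (.union p q) (fddUnion d1 d2)
  | seq {p q : Pol F} {d1 d2 : FDD F} :
      Compiles p d1 → Compiles q d2 → Compiles (.seq p q) (fddSeq d1 d2)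
  | star {p : Pol F} {d : FDD F} {N : ℕ} :
      Compiles p d → starIter d (N + 1) = starIter d N →
      Compiles (.star p) (starIter d N)

theorem fddSem_cond_of_eq {F : Type} {f : F} {n : ℕ} {d1 d2 : FDD F} {h : Hist F}
    (hf : h.1 f = n) : fddSem (.cond f n d1 d2) h = fddSem d1 h :=
  if_pos hf

theorem fddSem_cond_of_ne {F : Type} {f : F} {n : ℕ} {d1 d2 : FDD F} {h : Hist F}
    (hf : h.1 f ≠ n) : fddSem (.cond f n d1 d2) h = fddSem d2 h :=
  if_neg hf

theorem fddSem_cond_eq_of_branches {F : Type} {f : F} {n : ℕ} {d1 d2 : FDD F} {h : Hist F}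
    {S : Set (Hist F)} (hpos : h.1 f = n → fddSem d1 h = S)
    (hneg : h.1 f ≠ n → fddSem d2 h = S) :
    fddSem (.cond f n d1 d2) h = S := by
  by_cases hf : h.1 f = n
  · rw [fddSem_cond_of_eq hf, hpos hf]
  · rw [fddSem_cond_of_ne hf, hneg hf]

theorem fddSem_const_union {F : Type} [Fintype F] (s1 s2 : Finset (Act F)) (h : Hist F) :
    fddSem (.const (s1 ∪ s2)) h = fddSem (.const s1) h ∪ fddSem (.const s2) h := by
  simp only [fddSem, Finset.mem_union, Set.iUnion_or, Set.iUnion_union_distrib]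

/-- **Soundness of FDD union.** For all FDDs `d₁`, `d₂` and every history `h`,
`⟦d₁ ⊕ d₂⟧ h = ⟦d₁⟧ h ∪ ⟦d₂⟧ h`. -/
theorem fddUnion_sound (d1 d2 : FDD F) (h : Hist F) :
    fddSem (fddUnion d1 d2) h = fddSem d1 h ∪ fddSem d2 h := by
  induction d1, d2 using fddUnion.induct with
  | case1 => rw [fddUnion, fddSem_const_union]
  | case2 _ _ _ _ _ ih1 ih2 | case3 _ _ _ _ _ ih1 ih2 =>
    rw [fddUnion]
    exact fddSem_cond_eq_of_branches (fun hf => by rw [ih1, fddSem_cond_of_eq hf])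
      fun hf => by rw [ih2, fddSem_cond_of_ne hf]
  | case4 _ _ _ _ _ _ ih1 ih2 =>
    rw [fddUnion, if_pos rfl, if_pos rfl]
    exact fddSem_cond_eq_of_branches
      (fun hf => by rw [ih1, fddSem_cond_of_eq hf, fddSem_cond_of_eq hf])
      fun hf => by rw [ih2, fddSem_cond_of_ne hf, fddSem_cond_of_ne hf]
  | case5 _ _ _ _ _ _ _ hne hlt ih1 ih2 =>
    rw [fddUnion, if_pos rfl, if_neg hne, if_pos hlt]
    -- the tests `f = n₁` and `f = n₂` are exclusive: under `f = n₁` the right diagram acts as `d₂₂`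
    exact fddSem_cond_eq_of_branches
      (fun hf => by rw [ih1, fddSem_cond_of_eq hf, fddSem_cond_of_ne (hf ▸ hne)])
      fun hf => by rw [ih2, fddSem_cond_of_ne hf]
  | case6 _ _ _ _ _ _ _ hne hlt ih1 ih2 =>
    rw [fddUnion, if_pos rfl, if_neg hne, if_neg hlt]
    exact fddSem_cond_eq_of_branches
      (fun hf => by rw [ih1, fddSem_cond_of_eq hf, fddSem_cond_of_ne (hf ▸ Ne.symm hne)])
      fun hf => by rw [ih2, fddSem_cond_of_ne hf]
  | case7 _ _ _ _ _ _ _ _ hne hlt ih1 ih2 | case8 _ _ _ _ _ _ _ _ hne hlt ih1 ih2 =>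
    simp only [fddUnion, hne, hlt, ↓reduceIte]
    exact fddSem_cond_eq_of_branches (fun hf => by rw [ih1, fddSem_cond_of_eq hf])
      fun hf => by rw [ih2, fddSem_cond_of_ne hf]

end NetKAT
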